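/- The limit lim_{ε→0⁺} β_ε(Φ_ε(y)) = y holds uniformly in y∈M. -/

import Mathlib

open MeasureTheory Filter Topology Set Metric
open scoped NNReal ENNReal

noncomputable section
open scoped Classical

/-- The plane `ℝ²`. -/
abbrev Pt : Type := EuclideanSpace ℝ (Fin 2)

/-- Membership in the real Sobolev space `H¹(ℝ²,ℝ)` (modeled via the gradient). -/
def MemH1 (u : Pt → ℝ) : Prop :=
  MemLp u 2 (volume : Measure Pt) ∧ MemLp (fun x => gradient u x) 2 (volume : Measure Pt)

/-- `F(t) = ∫₀ᵗ f(s) ds`. -/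
def Fint (f : ℝ → ℝ) (t : ℝ) : ℝ := ∫ s in (0:ℝ)..t, f s

/-- `‖u‖_{V₀}² = ∫ (|∇u|² + V₀ u²)`. -/
def normVsq (V0 : ℝ) (u : Pt → ℝ) : ℝ := ∫ x : Pt, (‖gradient u x‖ ^ 2 + V0 * (u x) ^ 2)

/-- The `H¹(ℝ²,ℝ)` squared norm. -/
def h1NormSq (u : Pt → ℝ) : ℝ := normVsq 1 u

/-- The `H¹(ℝ²,ℝ)` inner product (with weight 1). -/
def h1Inner (u v : Pt → ℝ) : ℝ :=
  ∫ x : Pt, ((inner ℝ (gradient u x) (gradient v x) : ℝ) + u x * v x)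

/-- The limit functional `I_{V₀}(u) = ½‖u‖_{V₀}² − ½∫ F(u²)`. -/
def Ifun (f : ℝ → ℝ) (V0 : ℝ) (u : Pt → ℝ) : ℝ :=
  (1/2) * normVsq V0 u - (1/2) * ∫ x : Pt, Fint f ((u x)^2)

/-- The pairing `I'_{V₀}(u)[φ]`. -/
def Ipair (f : ℝ → ℝ) (V0 : ℝ) (u φ : Pt → ℝ) : ℝ :=
  (∫ x : Pt, ((inner ℝ (gradient u x) (gradient φ x) : ℝ) + V0 * u x * φ x))
  - ∫ x : Pt, f ((u x)^2) * u x * φ x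

/-- The Nehari manifold of the limit problem. -/
def NehariR (f : ℝ → ℝ) (V0 : ℝ) : Set (Pt → ℝ) :=
  {u | MemH1 u ∧ u ≠ 0 ∧ Ipair f V0 u u = 0}

/-- The ground state level `c_{V₀}`. -/
def groundLevel (f : ℝ → ℝ) (V0 : ℝ) : ℝ := sInf (Ifun f V0 '' NehariR f V0)

/-- Weak solution of the limit problem `−Δu + V₀ u = f(u²)u`. -/
def IsSolutionR (f : ℝ → ℝ) (V0 : ℝ) (u : Pt → ℝ) : Prop :=
  MemH1 u ∧ ∀ φ, MemH1 φ → Ipair f V0 u φ = 0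

/-- Ground state: nontrivial solution of least energy among nontrivial solutions. -/
def IsGroundState (f : ℝ → ℝ) (V0 : ℝ) (u : Pt → ℝ) : Prop :=
  u ≠ 0 ∧ IsSolutionR f V0 u ∧
  ∀ v, v ≠ 0 → IsSolutionR f V0 v → Ifun f V0 u ≤ Ifun f V0 v

/-- Positive radial ground state (least energy among positive nontrivial solutions). -/
def IsPosRadialGS (f : ℝ → ℝ) (V0 : ℝ) (ω : Pt → ℝ) : Prop :=
  (∀ x, 0 < ω x) ∧ (∀ x y : Pt, ‖x‖ = ‖y‖ → ω x = ω y) ∧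
  ω ≠ 0 ∧ IsSolutionR f V0 ω ∧
  ∀ v, v ≠ 0 → (∀ x, 0 < v x) → IsSolutionR f V0 v → Ifun f V0 ω ≤ Ifun f V0 v

/-- `β_p`: the least energy of `Ĩ₀` on its Nehari manifold. -/
def betap (V0 p : ℝ) : ℝ :=
  sInf ((fun u : Pt → ℝ => (1/2) * normVsq V0 u - (1/p) * ∫ x : Pt, |u x| ^ p) ''
    {u | MemH1 u ∧ u ≠ 0 ∧ normVsq V0 u = ∫ x : Pt, |u x| ^ p})

/-- `S_p`: best constant in `S_p (∫|u|^p)^{2/p} ≤ ∫(|∇u|²+u²)`. -/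
def SpConst (p : ℝ) : ℝ :=
  sSup {c : ℝ | ∀ u : Pt → ℝ, MemH1 u → c * (∫ x : Pt, |u x| ^ p) ^ (2/p) ≤ h1NormSq u}

/-- Hypotheses (f1)–(f5) on the nonlinearity, with AR exponent `θ`. -/
structure Hf (f : ℝ → ℝ) (θ V0 : ℝ) : Prop where
  hC1 : ContDiff ℝ 1 f
  h1 : ∀ t ≤ (0:ℝ), f t = 0
  h2a : ∀ a > 4 * Real.pi,
    Tendsto (fun t : ℝ => f (t^2) * t / Real.exp (a * t^2)) atTop (nhds 0)
  h2b : ∀ a : ℝ, 0 < a → a < 4 * Real.pi →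
    Tendsto (fun t : ℝ => f (t^2) * t / Real.exp (a * t^2)) atTop atTop
  hθ : 2 < θ
  h3 : ∀ t > (0:ℝ), 0 < (θ/2) * Fint f t ∧ (θ/2) * Fint f t ≤ t * f t
  h4 : ∃ p > (2:ℝ), ∃ Cp : ℝ,
    max ((betap V0 p * (2*θ/(θ-2)) / min 1 V0) ^ ((p-2)/2))
        (V0 * ((p-2)/p) ^ ((p-2)/2) * SpConst p ^ (p/2)) < Cp ∧
    ∀ t > (0:ℝ), ((p-2)/2) * Cp * t ^ ((p-4)/2) ≤ deriv f t
  h5 : ∀ t ≥ (0:ℝ), deriv f t ≤ Real.exp (4 * Real.pi * t) - 1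

/-- Hypotheses (V1),(V2) on the potential. -/
structure HV (V : Pt → ℝ) (V0 : ℝ) (Λ : Set Pt) : Prop where
  cont : Continuous V
  pos : 0 < V0
  lb : ∀ x, V0 ≤ V x
  openΛ : IsOpen Λ
  bddΛ : Bornology.IsBounded Λ
  neΛ : Λ.Nonempty
  attain : ∃ x ∈ Λ, V x = V0
  bdry : ∀ x ∈ frontier Λ, V0 < V x

/-- `M = {x ∈ Λ : V x = V₀}`. -/
def Mset (V : Pt → ℝ) (V0 : ℝ) (Λ : Set Pt) : Set Pt := {x ∈ Λ | V x = V0}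

/-- `M_δ = {x : dist(x,M) < δ}`. -/
def Mdelta (V : Pt → ℝ) (V0 : ℝ) (Λ : Set Pt) (δ : ℝ) : Set Pt :=
  {x : Pt | Metric.infDist x (Mset V V0 Λ) < δ}

/-- `A` is Hölder continuous with some exponent `α ∈ (0,1]`. -/
def HolderA (A : Pt → Pt) : Prop :=
  ∃ (C r : ℝ≥0), 0 < (r : ℝ) ∧ (r : ℝ) ≤ 1 ∧ HolderWith C r A

/-- Components of the magnetic gradient `(∇/i − A)u`. -/
def magDeriv (A : Pt → Pt) (u : Pt → ℂ) (x : Pt) (j : Fin 2) : ℂ :=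
  -Complex.I * fderiv ℝ u x (EuclideanSpace.single j (1:ℝ)) - (A x j : ℝ) * u x

/-- Components of the scaled magnetic gradient `((ε/i)∇ − A)u`. -/
def magDerivE (A : Pt → Pt) (ε : ℝ) (u : Pt → ℂ) (x : Pt) (j : Fin 2) : ℂ :=
  (ε : ℂ) * (-Complex.I) * fderiv ℝ u x (EuclideanSpace.single j (1:ℝ)) - (A x j : ℝ) * u x

/-- `Re (z * conj w)`. -/
def magRe (z w : ℂ) : ℝ := (z * (starRingEnd ℂ) w).re

/-- The inner product of the space `H_ε`. -/
def heInner (A : Pt → Pt) (V : Pt → ℝ) (ε : ℝ) (u v : Pt → ℂ) : ℝ :=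
  ∫ x : Pt,
    ((∑ j, magRe (magDeriv (fun z => A (ε • z)) u x j) (magDeriv (fun z => A (ε • z)) v x j))
      + V (ε • x) * magRe (u x) (v x))

/-- The squared norm of `H_ε`. -/
def heNormSq (A : Pt → Pt) (V : Pt → ℝ) (ε : ℝ) (u : Pt → ℂ) : ℝ := heInner A V ε u u

/-- Membership in `H_ε` (modeled as finiteness of the magnetic Sobolev norm). -/
def MemHe (A : Pt → Pt) (V : Pt → ℝ) (ε : ℝ) (u : Pt → ℂ) : Prop :=
  MemLp u 2 (volume : Measure Pt) ∧
  Integrable (fun x : Pt =>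
    (∑ j, ‖magDeriv (fun z => A (ε • z)) u x j‖ ^ 2) + V (ε • x) * ‖u x‖ ^ 2) volume

/-- Membership in the magnetic Sobolev space `H¹_A(ℝ²,ℂ)` for the `ε`-scaled gradient. -/
def MemH1A (A : Pt → Pt) (ε : ℝ) (u : Pt → ℂ) : Prop :=
  MemLp u 2 (volume : Measure Pt) ∧
  Integrable (fun x : Pt => ∑ j, ‖magDerivE A ε u x j‖ ^ 2) volume

/-- The truncation `f̂` of `f` at level `a`. -/
def fhat (f : ℝ → ℝ) (V0 k a : ℝ) (t : ℝ) : ℝ := if t ≤ a then f t else V0 / k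

/-- Properties of the penalization data `(k, a, t_a, T_a, f̃)`. -/
structure Pen (f : ℝ → ℝ) (V0 θ k a ta Ta : ℝ) (ftil : ℝ → ℝ) : Prop where
  hk : 1 < k
  hka : k * f a = V0
  hlevel : groundLevel f V0 < (1/2 - 1/θ - 1/(2*k)) * min 1 V0
  hta : 0 < ta
  htaa : ta < a
  haTa : a < Ta
  hC1 : ContDiff ℝ 1 ftil
  hout : ∀ t, t ∉ Icc ta Ta → ftil t = fhat f V0 k a t
  hle : ∀ t ∈ Icc ta Ta, ftil t ≤ fhat f V0 k a t
  hmono : MonotoneOn ftil (Icc ta Ta)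

/-- The penalized nonlinearity `g(x,t) = χ_Λ(x) f(t) + (1−χ_Λ(x)) f̃(t)`. -/
def gpen (f ftil : ℝ → ℝ) (Λ : Set Pt) (x : Pt) (t : ℝ) : ℝ :=
  if x ∈ Λ then f t else ftil t

/-- `G(x,t) = ∫₀ᵗ g(x,s) ds`. -/
def Gpen (f ftil : ℝ → ℝ) (Λ : Set Pt) (x : Pt) (t : ℝ) : ℝ :=
  ∫ s in (0:ℝ)..t, gpen f ftil Λ x s

/-- `∂g/∂t`. -/
def gpen' (f ftil : ℝ → ℝ) (Λ : Set Pt) (x : Pt) (t : ℝ) : ℝ :=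
  if x ∈ Λ then deriv f t else deriv ftil t

/-- The modified functional `J_ε`. -/
def Jfun (A : Pt → Pt) (V : Pt → ℝ) (f ftil : ℝ → ℝ) (Λ : Set Pt) (ε : ℝ) (u : Pt → ℂ) : ℝ :=
  (1/2) * heNormSq A V ε u - (1/2) * ∫ x : Pt, Gpen f ftil Λ (ε • x) (‖u x‖ ^ 2)

/-- The pairing `J'_ε(u)[φ]`. -/
def Jpair (A : Pt → Pt) (V : Pt → ℝ) (f ftil : ℝ → ℝ) (Λ : Set Pt) (ε : ℝ)
    (u φ : Pt → ℂ) : ℝ :=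
  heInner A V ε u φ - ∫ x : Pt, gpen f ftil Λ (ε • x) (‖u x‖ ^ 2) * magRe (u x) (φ x)

/-- The pairing `T'_ε(u)[φ]` where `T_ε(u) = ‖u‖_ε² − ∫ g(εx,|u|²)|u|²`. -/
def Tpair (A : Pt → Pt) (V : Pt → ℝ) (f ftil : ℝ → ℝ) (Λ : Set Pt) (ε : ℝ)
    (u φ : Pt → ℂ) : ℝ :=
  2 * heInner A V ε u φ -
    2 * ∫ x : Pt, (gpen f ftil Λ (ε • x) (‖u x‖ ^ 2)
      + gpen' f ftil Λ (ε • x) (‖u x‖ ^ 2) * ‖u x‖ ^ 2) * magRe (u x) (φ x)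

/-- The Nehari manifold `N_ε` of the modified functional. -/
def NehariE (A : Pt → Pt) (V : Pt → ℝ) (f ftil : ℝ → ℝ) (Λ : Set Pt) (ε : ℝ) :
    Set (Pt → ℂ) :=
  {u | MemHe A V ε u ∧ u ≠ 0 ∧ Jpair A V f ftil Λ ε u u = 0}

/-- `(PS)_d` sequence for `J_ε`. -/
def PSseq (A : Pt → Pt) (V : Pt → ℝ) (f ftil : ℝ → ℝ) (Λ : Set Pt) (ε d : ℝ)
    (un : ℕ → Pt → ℂ) : Prop :=
  (∀ n, MemHe A V ε (un n)) ∧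
  Tendsto (fun n => Jfun A V f ftil Λ ε (un n)) atTop (nhds d) ∧
  ∀ δ > (0:ℝ), ∃ N : ℕ, ∀ n ≥ N, ∀ φ, MemHe A V ε φ → heNormSq A V ε φ ≤ 1 →
    |Jpair A V f ftil Λ ε (un n) φ| ≤ δ

/-- Weak solution of the modified problem. -/
def IsSolutionE (A : Pt → Pt) (V : Pt → ℝ) (f ftil : ℝ → ℝ) (Λ : Set Pt) (ε : ℝ)
    (u : Pt → ℂ) : Prop :=
  MemHe A V ε u ∧ ∀ φ, MemHe A V ε φ → Jpair A V f ftil Λ ε u φ = 0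

/-- The pairing associated with the original magnetic equation (1.1). -/
def origPair (A : Pt → Pt) (V : Pt → ℝ) (f : ℝ → ℝ) (ε : ℝ) (u φ : Pt → ℂ) : ℝ :=
  (∫ x : Pt, ((∑ j, magRe (magDerivE A ε u x j) (magDerivE A ε φ x j))
      + V x * magRe (u x) (φ x)))
  - ∫ x : Pt, f (‖u x‖ ^ 2) * magRe (u x) (φ x)

/-- Weak solution of the original magnetic equation (1.1). -/
def IsSolutionOrig (A : Pt → Pt) (V : Pt → ℝ) (f : ℝ → ℝ) (ε : ℝ) (u : Pt → ℂ) : Prop :=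
  MemH1A A ε u ∧ ∀ φ, MemH1A A ε φ → origPair A V f ε u φ = 0

/-- A subset `S` of `X` is contractible in `X`. -/
def ContractibleIn (S X : Set Pt) : Prop :=
  ∃ H : C(↥S × ℝ, ↥X), ∃ x0 : ↥X,
    (∀ s : ↥S, ((H (s, 0) : Pt) = (s : Pt))) ∧ ∀ s : ↥S, H (s, 1) = x0

/-- Ljusternik–Schnirelmann category of `A` in `X`. -/
def LScat (A X : Set Pt) : ℕ :=
  sInf {n : ℕ | ∃ U : Fin n → Set Pt,
    (∀ i, IsClosed (U i) ∧ U i ⊆ X ∧ ContractibleIn (U i) X) ∧ A ⊆ ⋃ i, U i}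

/-- The truncation map `Υ`. -/
def Upsilon (ρ : ℝ) (x : Pt) : Pt := if ‖x‖ < ρ then x else (ρ / ‖x‖) • x

/-- The barycenter map `β_ε`. -/
def baryc (ρ ε : ℝ) (u : Pt → ℂ) : Pt :=
  (∫ x : Pt, ‖u x‖ ^ 2)⁻¹ • ∫ x : Pt, ‖u x‖ ^ 2 • Upsilon ρ (ε • x)

/-- Admissible cut-off function `η` for the scale `δ`. -/
def cutoffOK (η : ℝ → ℝ) (δ : ℝ) : Prop :=
  ContDiff ℝ 1 η ∧ (∀ t, η t ∈ Icc (0:ℝ) 1) ∧ AntitoneOn η (Ici 0) ∧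
  (∀ t ∈ Icc (0:ℝ) (δ/2), η t = 1) ∧ ∀ t ≥ δ, η t = 0

/-- The test functions `Ψ_{ε,y}`. -/
def Psi (A : Pt → Pt) (ω : Pt → ℝ) (η : ℝ → ℝ) (ε : ℝ) (y : Pt) (x : Pt) : ℂ :=
  ((η ‖ε • x - y‖ * ω (ε⁻¹ • (ε • x - y)) : ℝ) : ℂ) *
    Complex.exp (Complex.I * ((inner ℝ (A y) (ε⁻¹ • (ε • x - y)) : ℝ) : ℂ))


theorem statement15 (V : Pt → ℝ) (V0 : ℝ) (Λ : Set Pt) (A : Pt → Pt) (f ftil : ℝ → ℝ)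
    (θ k a ta Ta : ℝ) (hV : HV V V0 Λ) (hA : HolderA A) (hf : Hf f θ V0)
    (hpen : Pen f V0 θ k a ta Ta ftil) (δ : ℝ) (hδ : 0 < δ) (hMδ : Mdelta V V0 Λ δ ⊆ Λ)
    (ω : Pt → ℝ) (hω : IsPosRadialGS f V0 ω) (η : ℝ → ℝ) (hη : cutoffOK η δ)
    (ρ : ℝ) (hρ : Mdelta V V0 Λ δ ⊆ Metric.ball 0 ρ) :
    ∀ ζ > (0:ℝ), ∃ ε0 > (0:ℝ), ∀ ε : ℝ, 0 < ε → ε < ε0 → ∀ y ∈ Mset V V0 Λ, ∀ tε > (0:ℝ),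
      IsMaxOn (fun t : ℝ => Jfun A V f ftil Λ ε (fun x => (t : ℂ) * Psi A ω η ε y x))
        (Ici 0) tε →
      ‖baryc ρ ε (fun x => (tε : ℂ) * Psi A ω η ε y x) - y‖ < ζ := by
  intro ζ hζ
  refine ⟨1, one_pos, fun ε hε hε1 y hy tε htε _hmax => ?_⟩
  have hεne : ε ≠ 0 := hε.ne'
  set x0 : Pt := ε⁻¹ • y with hx0
  have hωpos : ∀ x, 0 < ω x := hω.1
  have hωrad : ∀ x y : Pt, ‖x‖ = ‖y‖ → ω x = ω y := hω.2.1
  have hωL2 : MemLp ω 2 (volume : Measure Pt) := hω.2.2.2.1.1.1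
  have hωm : AEStronglyMeasurable ω (volume : Measure Pt) := hωL2.aestronglyMeasurable
  have hωsq : Integrable (fun v : Pt => ω v ^ 2) volume := hωL2.integrable_sq
  have hηc : Continuous η := hη.1.continuous
  have hη01 : ∀ t, η t ∈ Icc (0:ℝ) 1 := hη.2.1
  have hη1 : ∀ t ∈ Icc (0:ℝ) (δ/2), η t = 1 := hη.2.2.2.1
  have hη0 : ∀ t ≥ δ, η t = 0 := hη.2.2.2.2
  set h : Pt → ℝ := fun v => tε ^ 2 * (η (ε * ‖v‖) * ω v) ^ 2 with hhdef
  set K : Pt → Pt := fun v => h v • (ε • v) with hKdef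
  -- pointwise squared norm
  have normsq : ∀ x : Pt, ‖(tε : ℂ) * Psi A ω η ε y x‖ ^ 2 = h (x - x0) := by
    intro x
    have e1 : ε⁻¹ • (ε • x - y) = x - x0 := by
      rw [smul_sub, smul_smul, inv_mul_cancel₀ hεne, one_smul, hx0]
    have e2 : ‖ε • x - y‖ = ε * ‖x - x0‖ := by
      have : ε • x - y = ε • (x - x0) := by
        rw [smul_sub, hx0, smul_smul, mul_inv_cancel₀ hεne, one_smul]
      rw [this, norm_smul, Real.norm_eq_abs, abs_of_pos hε]
    simp only [Psi, e1, e2]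
    rw [norm_mul, norm_mul]
    have hexp : ‖Complex.exp (Complex.I * (((inner ℝ (A y) (x - x0) : ℝ)) : ℂ))‖ = 1 := by
      rw [Complex.norm_exp]; simp
    rw [hexp, mul_one, Complex.norm_real, Complex.norm_real]
    simp only [hhdef, Real.norm_eq_abs]
    rw [mul_pow, sq_abs, sq_abs]
  have hhnn : ∀ v, 0 ≤ h v := by intro v; simp only [hhdef]; positivity
  -- measurability and integrability of h
  have hhm : AEStronglyMeasurable h (volume : Measure Pt) := by
    have hq : AEStronglyMeasurable (fun v : Pt => η (ε * ‖v‖) * ω v) volume :=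
      ((hηc.comp (continuous_const.mul (continuous_norm (E := Pt)))).aestronglyMeasurable).mul hωm
    have : h = fun v => tε ^ 2 * ((η (ε * ‖v‖) * ω v) * (η (ε * ‖v‖) * ω v)) := by
      funext v; simp only [hhdef]; ring
    rw [this]
    exact aestronglyMeasurable_const.mul (hq.mul hq)
  have hhint : Integrable h volume := by
    refine ((hωsq.const_mul (tε ^ 2)).mono' hhm ?_)
    filter_upwards with v
    rw [Real.norm_eq_abs, abs_of_nonneg (hhnn v)]
    have h1 : 0 ≤ η (ε * ‖v‖) := (hη01 _).1
    have h2 : η (ε * ‖v‖) ≤ 1 := (hη01 _).2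
    simp only [hhdef]
    have h3 : (η (ε * ‖v‖)) ^ 2 ≤ 1 := by nlinarith
    have h4 : (η (ε * ‖v‖) * ω v) ^ 2 ≤ ω v ^ 2 := by
      rw [mul_pow]
      nlinarith [sq_nonneg (ω v)]
    exact mul_le_mul_of_nonneg_left h4 (sq_nonneg tε)
  -- positivity of ∫ h
  have hr : (0:ℝ) < δ / (2 * ε) := by positivity
  have hIpos : 0 < ∫ v, h v := by
    rcases (integral_nonneg (show (0 : Pt → ℝ) ≤ h from hhnn)).lt_or_eq with hlt | heq
    · exact hlt
    · exfalso
      have hzero : h =ᵐ[volume] 0 :=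
        (integral_eq_zero_iff_of_nonneg (show (0 : Pt → ℝ) ≤ h from hhnn) hhint).mp heq.symm
      have hsub : Metric.ball (0 : Pt) (δ / (2 * ε)) ⊆ {v : Pt | ¬ h v = 0} := by
        intro v hv
        have hvr : ‖v‖ < δ / (2 * ε) := mem_ball_zero_iff.mp hv
        have hle : ε * ‖v‖ ≤ δ / 2 := by
          have := (mul_lt_mul_of_pos_left hvr hε)
          rw [show ε * (δ / (2 * ε)) = δ / 2 by field_simp] at this
          exact this.le
        have hone : η (ε * ‖v‖) = 1 := hη1 _ ⟨by positivity, hle⟩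
        have := hωpos v
        simp only [mem_setOf_eq, hhdef, hone, one_mul]
        positivity
      have hnull : volume {v : Pt | ¬ h v = 0} = 0 := by
        have := hzero
        rw [Filter.EventuallyEq, ae_iff] at this
        simpa using this
      have := measure_mono_null hsub hnull
      exact (measure_ball_pos volume (0 : Pt) hr).ne' this
  -- K is odd
  have hheven : ∀ v : Pt, h (-v) = h v := by
    intro v
    simp only [hhdef, norm_neg, hωrad (-v) v (norm_neg v)]
  have hKodd : ∀ v : Pt, K (-v) = -K v := by
    intro v
    simp only [hKdef, hheven v, smul_neg]
  -- K integrable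
  have hKm : AEStronglyMeasurable K (volume : Measure Pt) := by
    have hsm : AEStronglyMeasurable (fun v : Pt => ε • v) volume :=
      (continuous_const_smul ε).aestronglyMeasurable
    exact hhm.smul hsm
  have hKbd : ∀ v : Pt, ‖K v‖ ≤ δ * h v := by
    intro v
    simp only [hKdef, norm_smul, Real.norm_eq_abs, abs_of_nonneg (hhnn v), abs_of_pos hε]
    rcases lt_or_ge (ε * ‖v‖) δ with hlt | hge
    · calc h v * (ε * ‖v‖) ≤ h v * δ := by
            exact mul_le_mul_of_nonneg_left hlt.le (hhnn v)
        _ = δ * h v := mul_comm _ _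
    · have : η (ε * ‖v‖) = 0 := hη0 _ hge
      simp [hhdef, this]
  have hKint : Integrable K volume := by
    refine (hhint.const_mul δ).mono' hKm ?_
    filter_upwards with v using hKbd v
  have hK0 : ∫ v, K v = 0 := by
    have h1 : ∫ v, K (-v) = ∫ v, K v := integral_neg_eq_self K volume
    simp only [hKodd] at h1
    rw [integral_neg] at h1
    have h3 : (2:ℝ) • ∫ v, K v = 0 := by
      rw [two_smul]
      nth_rewrite 1 [← h1]
      abel
    simpa using (smul_eq_zero.mp h3).resolve_left (by norm_num)
  -- translated integrabilities
  have hgI : Integrable (fun x : Pt => h (x - x0)) volume := hhint.comp_sub_right x0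
  have hKxI : Integrable (fun x : Pt => K (x - x0)) volume := hKint.comp_sub_right x0
  have hIy : Integrable (fun x : Pt => h (x - x0) • y) volume := hgI.smul_const y
  -- pointwise identity for the numerator
  have hpt : ∀ x : Pt, ‖(tε : ℂ) * Psi A ω η ε y x‖ ^ 2 • Upsilon ρ (ε • x)
      = h (x - x0) • y + K (x - x0) := by
    intro x
    rw [normsq x]
    by_cases hz : h (x - x0) = 0
    · simp [hz, hKdef]
    · have hηne : η (ε * ‖x - x0‖) ≠ 0 := by
        intro h0; exact hz (by simp [hhdef, h0])
      have hlt : ε * ‖x - x0‖ < δ := by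
        by_contra hge
        push_neg at hge
        exact hηne (hη0 _ hge)
      have e2' : ε • x - y = ε • (x - x0) := by
        rw [smul_sub, hx0, smul_smul, mul_inv_cancel₀ hεne, one_smul]
      have hnormlt : ‖ε • x - y‖ < δ := by
        rw [e2', norm_smul, Real.norm_eq_abs, abs_of_pos hε]; exact hlt
      have hmem : ε • x ∈ Mdelta V V0 Λ δ := by
        simp only [Mdelta, mem_setOf_eq]
        calc Metric.infDist (ε • x) (Mset V V0 Λ) ≤ dist (ε • x) y :=
              Metric.infDist_le_dist_of_mem hy
          _ < δ := by rwa [dist_eq_norm]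
      have hxρ : ‖ε • x‖ < ρ := mem_ball_zero_iff.mp (hρ hmem)
      have hU : Upsilon ρ (ε • x) = ε • x := by
        simp only [Upsilon]; rw [if_pos hxρ]
      have hdecomp : ε • x = y + ε • (x - x0) := by
        rw [smul_sub, hx0, smul_smul, mul_inv_cancel₀ hεne, one_smul]; abel
      rw [hU, hdecomp, smul_add]
  -- compute the barycenter
  have hden : (∫ x : Pt, ‖(tε : ℂ) * Psi A ω η ε y x‖ ^ 2) = ∫ v, h v := by
    simp only [normsq]
    exact integral_sub_right_eq_self h x0
  have hnum : (∫ x : Pt, ‖(tε : ℂ) * Psi A ω η ε y x‖ ^ 2 • Upsilon ρ (ε • x))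
      = (∫ v, h v) • y := by
    rw [show (fun x : Pt => ‖(tε : ℂ) * Psi A ω η ε y x‖ ^ 2 • Upsilon ρ (ε • x))
        = fun x : Pt => h (x - x0) • y + K (x - x0) from funext hpt]
    rw [integral_add hIy hKxI, integral_smul_const,
      integral_sub_right_eq_self h x0, integral_sub_right_eq_self K x0, hK0, add_zero]
  have hbar : baryc ρ ε (fun x => (tε : ℂ) * Psi A ω η ε y x) = y := by
    simp only [baryc]
    rw [hden, hnum, smul_smul, inv_mul_cancel₀ hIpos.ne', one_smul]
  rw [hbar, sub_self, norm_zero]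
  exact hζ

end
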